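/- Let G be a finite σ-soluble group, N a minimal normal subgroup of G which is a σ_1-group, and A a σ-nilpotent subgroup of G such that the Hall σ_1'-subgroup A_{σ_1'} of A centralizes N. Then AN is σ-nilpotent. -/

import Mathlib

open Pointwise

/-- `σ` is a partition of the set of all primes. -/
def IsPrimePartition {ι : Type*} (σ : ι → Set ℕ) : Prop :=
  (∀ i, ∀ p ∈ σ i, p.Prime) ∧ (∀ p : ℕ, p.Prime → ∃! i, p ∈ σ i)

/-- every prime dividing `n` lies in `σ i`. -/
def PrimaryIn {ι : Type*} (σ : ι → Set ℕ) (i : ι) (n : ℕ) : Prop :=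
  ∀ p : ℕ, p.Prime → p ∣ n → p ∈ σ i

/-- `σ i ∈ σ(G)` : some prime of `σ i` divides `|G|`. -/
def MemSigma {ι : Type*} (σ : ι → Set ℕ) (i : ι) (G : Type*) [Group G] : Prop :=
  ∃ p : ℕ, p.Prime ∧ p ∈ σ i ∧ p ∣ Nat.card G

/-- the centralizer of the factor `H/K` in `G` (as a set). -/
def chiefCentralizer {G : Type*} [Group G] (H K : Subgroup G) : Set G :=
  {g : G | ∀ h ∈ H, g * h * g⁻¹ * h⁻¹ ∈ K}

/-- `H/K` is a chief factor of `G`. -/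
def IsChiefFactor {G : Type*} [Group G] (H K : Subgroup G) : Prop :=
  H.Normal ∧ K.Normal ∧ K < H ∧
    ∀ L : Subgroup G, L.Normal → K ≤ L → L ≤ H → L = K ∨ L = H

/-- `H/K` is σ-central in `G` : `(H/K) ⋊ (G/C_G(H/K))` is σ-primary,
i.e. every prime dividing `|H/K| · |G/C_G(H/K)|` lies in one block of σ. -/
def SigmaCentral {ι : Type*} (σ : ι → Set ℕ) {G : Type*} [Group G]
    (H K : Subgroup G) : Prop :=
  ∃ i, PrimaryIn σ i ((Nat.card H / Nat.card K) * (Nat.card G / Nat.card (chiefCentralizer H K)))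

/-- `G` is σ-nilpotent: every chief factor is σ-central. -/
def SigmaNilpotent {ι : Type*} (σ : ι → Set ℕ) (G : Type*) [Group G] : Prop :=
  ∀ H K : Subgroup G, IsChiefFactor H K → SigmaCentral σ H K

/-- `G` is σ-soluble: every chief factor is σ-primary. -/
def SigmaSoluble {ι : Type*} (σ : ι → Set ℕ) (G : Type*) [Group G] : Prop :=
  ∀ H K : Subgroup G, IsChiefFactor H K → ∃ i, PrimaryIn σ i (Nat.card H / Nat.card K)

/-- `H` is a Hall π-subgroup of `G`. -/
def IsHall {G : Type*} [Group G] (π : Set ℕ) (H : Subgroup G) : Prop :=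
  (∀ p : ℕ, p.Prime → p ∣ Nat.card H → p ∈ π) ∧
  (∀ p : ℕ, p.Prime → p ∣ H.index → p ∉ π)

/-- `H` is a π-subgroup of `G`. -/
def IsPiSubgroup {G : Type*} [Group G] (π : Set ℕ) (H : Subgroup G) : Prop :=
  ∀ p : ℕ, p.Prime → p ∣ Nat.card H → p ∈ π

/-- `K` is a Hall π-subgroup of the subgroup `A` of `G`. -/
def IsHallIn {G : Type*} [Group G] (π : Set ℕ) (K A : Subgroup G) : Prop :=
  K ≤ A ∧ (∀ p : ℕ, p.Prime → p ∣ Nat.card K → p ∈ π) ∧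
    (∀ p : ℕ, p.Prime → p ∣ K.relIndex A → p ∉ π)

/-- `G` satisfies `D_π`. -/
def SatisfiesD (π : Set ℕ) (G : Type*) [Group G] : Prop :=
  (∃ H : Subgroup G, IsHall π H) ∧
  (∀ H K : Subgroup G, IsHall π H → IsHall π K →
      ∃ g : G, K = Subgroup.map (MulAut.conj g).toMonoidHom H) ∧
  (∀ S : Subgroup G, IsPiSubgroup π S →
      ∃ H : Subgroup G, IsHall π H ∧ S ≤ H)

/-- `N` is a minimal normal subgroup of `G`. -/
def IsMinimalNormal {G : Type*} [Group G] (N : Subgroup G) : Prop :=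
  N.Normal ∧ N ≠ ⊥ ∧ ∀ L : Subgroup G, L.Normal → L ≤ N → L = ⊥ ∨ L = N

/-- the σ-Fitting subgroup: product of all normal σ-nilpotent subgroups. -/
def sigmaFitting {ι : Type*} (σ : ι → Set ℕ) (G : Type*) [Group G] : Subgroup G :=
  ⨆ H ∈ {H : Subgroup G | H.Normal ∧ SigmaNilpotent σ H}, H

/-- `O_π(G)`: the largest normal π-subgroup, i.e. product of all normal π-subgroups. -/
def Opi (π : Set ℕ) (G : Type*) [Group G] : Subgroup G :=
  ⨆ H ∈ {H : Subgroup G | H.Normal ∧ IsPiSubgroup π H}, H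

/-!
Write `M = AN` and let `H/K` be a chief factor of `M`. As `N` is normal in `M`, `H ∩ KN` is
a normal subgroup of `M` between `K` and `H`, so either `H ≤ KN` or `H ∩ KN = K`.

If `H ≤ KN`, then `H/K` is a section of `N`, hence a `σ_i`-group, and it is centralized by
`A_{σ_i'}`, whose index `|A : A_{σ_i'}| · |AN : A|` in `M` is a `σ_i`-number because `|AN : A|`
divides `|N|`; so `H/K` is `σ_i`-central.

If `H ∩ KN = K`, then `H/K` is `M`-isomorphic to `HN/KN`, a chief factor of
`M/N ≅ A/(A ∩ N)`, which is σ-nilpotent as a quotient of `A`.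
-/

open Subgroup
open scoped commutatorElement

section

variable {X Y : Type*} [Group X] [Group Y]

def chiefCentralizerSubgroup (H K : Subgroup X) [K.Normal] : Subgroup X :=
  (centralizer (H.map (QuotientGroup.mk' K) : Set (X ⧸ K))).comap (QuotientGroup.mk' K)

theorem coe_chiefCentralizerSubgroup (H K : Subgroup X) [K.Normal] :
    (chiefCentralizerSubgroup H K : Set X) = chiefCentralizer H K := by
  ext g
  simp only [chiefCentralizerSubgroup, chiefCentralizer, coe_comap, Set.mem_preimage,
    SetLike.mem_coe, mem_centralizer_iff, coe_map, Set.mem_image, forall_exists_index, and_imp,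
    forall_apply_eq_imp_iff₂, Set.mem_ofPred_eq, ← commutatorElement_def,
    ← QuotientGroup.eq_one_iff]
  refine forall₂_congr fun h _ => ?_
  rw [← QuotientGroup.mk'_apply, map_commutatorElement, commutatorElement_eq_one_iff_mul_comm,
    eq_comm]

variable {ι : Type*} {σ : ι → Set ℕ} {i : ι} {m n : ℕ}

theorem PrimaryIn.mul (hm : PrimaryIn σ i m) (hn : PrimaryIn σ i n) : PrimaryIn σ i (m * n) :=
  fun p hp hpmn => (hp.dvd_mul.1 hpmn).elim (hm p hp) (hn p hp)

theorem PrimaryIn.of_dvd (hn : PrimaryIn σ i n) (hmn : m ∣ n) : PrimaryIn σ i m :=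
  fun p hp hpm => hn p hp (hpm.trans hmn)

theorem card_div_card_eq_relIndex [Finite X] {H K : Subgroup X} (hKH : K ≤ H) :
    Nat.card H / Nat.card K = K.relIndex H := by
  refine Nat.div_eq_of_eq_mul_left Nat.card_pos ?_
  rw [← relIndex_bot_left, ← relIndex_bot_left, mul_comm,
    relIndex_mul_relIndex _ _ _ bot_le hKH]

theorem card_div_card_chiefCentralizer_eq_index [Finite X] (H K : Subgroup X) [K.Normal] :
    Nat.card X / Nat.card (chiefCentralizer H K) = (chiefCentralizerSubgroup H K).index := by
  rw [← coe_chiefCentralizerSubgroup]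
  exact Nat.div_eq_of_eq_mul_left Nat.card_pos (index_mul_card _).symm

theorem sigmaCentral_iff [Finite X] {H K : Subgroup X} [K.Normal] (hKH : K ≤ H) :
    SigmaCentral σ H K ↔
      ∃ i, PrimaryIn σ i (K.relIndex H * (chiefCentralizerSubgroup H K).index) := by
  rw [SigmaCentral, card_div_card_eq_relIndex hKH, card_div_card_chiefCentralizer_eq_index]

theorem relIndex_sup_normal_right [Finite X] (H N : Subgroup X) [N.Normal] :
    H.relIndex (H ⊔ N) = H.relIndex N := by
  have hpos : 0 < N.relIndex H := Nat.pos_of_ne_zero (index_ne_zero_of_finite (H := N.subgroupOf H))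
  refine Nat.eq_of_mul_eq_mul_left hpos ?_
  calc N.relIndex H * H.relIndex (H ⊔ N) = (H ⊓ N).relIndex (H ⊔ N) := by
        rw [← inf_relIndex_left, relIndex_mul_relIndex _ _ _ inf_le_left le_sup_left]
    _ = N.relIndex H * H.relIndex N := by
        rw [← relIndex_mul_relIndex _ _ _ inf_le_right le_sup_right, inf_relIndex_right,
          relIndex_sup_right, mul_comm]

section Comap

variable {f : X →* Y}

theorem preimage_chiefCentralizer (hf : Function.Surjective f) (H K : Subgroup Y) :
    f ⁻¹' chiefCentralizer H K = chiefCentralizer (H.comap f) (K.comap f) := by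
  ext g
  simp only [chiefCentralizer, Set.mem_preimage, Set.mem_ofPred_eq, mem_comap, map_mul, map_inv]
  exact hf.forall

theorem chiefCentralizerSubgroup_comap (hf : Function.Surjective f) (H K : Subgroup Y) [K.Normal] :
    chiefCentralizerSubgroup (H.comap f) (K.comap f) = (chiefCentralizerSubgroup H K).comap f :=
  SetLike.coe_injective <| by
    rw [coe_chiefCentralizerSubgroup, coe_comap, coe_chiefCentralizerSubgroup,
      preimage_chiefCentralizer hf]

theorem sigmaCentral_comap_iff [Finite X] (hf : Function.Surjective f) {H K : Subgroup Y}
    [K.Normal] (hKH : K ≤ H) :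
    SigmaCentral σ (H.comap f) (K.comap f) ↔ SigmaCentral σ H K := by
  have : Finite Y := Finite.of_surjective f hf
  rw [sigmaCentral_iff (comap_mono hKH), sigmaCentral_iff hKH, relIndex_comap,
    map_comap_eq_self_of_surjective hf, chiefCentralizerSubgroup_comap hf,
    index_comap_of_surjective _ hf]

theorem IsChiefFactor.comap (hf : Function.Surjective f) {H K : Subgroup Y}
    (hHK : IsChiefFactor H K) : IsChiefFactor (H.comap f) (K.comap f) := by
  obtain ⟨hH, hK, hKH, hmin⟩ := hHK
  refine ⟨hH.comap f, hK.comap f, (comap_lt_comap_of_surjective hf).2 hKH,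
    fun L hL hKL hLH => ?_⟩
  have hL_eq : (L.map f).comap f = L := comap_map_eq_self ((ker_le_comap f K).trans hKL)
  rw [← hL_eq]
  refine (hmin (L.map f) (hL.map f hf) ?_ ?_).imp (congrArg _) (congrArg _)
  · exact (map_comap_eq_self_of_surjective hf K).ge.trans (map_mono hKL)
  · exact (map_mono hLH).trans (map_comap_eq_self_of_surjective hf H).le

theorem IsChiefFactor.of_comap (hf : Function.Surjective f) {H K : Subgroup Y}
    (hHK : IsChiefFactor (H.comap f) (K.comap f)) : IsChiefFactor H K := by
  obtain ⟨hH, hK, hKH, hmin⟩ := hHK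
  refine ⟨map_comap_eq_self_of_surjective hf H ▸ hH.map f hf,
    map_comap_eq_self_of_surjective hf K ▸ hK.map f hf, (comap_lt_comap_of_surjective hf).1 hKH,
    fun L hL hKL hLH => ?_⟩
  exact (hmin (L.comap f) (hL.comap f) (comap_mono hKL) (comap_mono hLH)).imp
    (fun h => comap_injective hf h) (fun h => comap_injective hf h)

theorem SigmaNilpotent.of_surjective [Finite X] (hf : Function.Surjective f)
    (hX : SigmaNilpotent σ X) : SigmaNilpotent σ Y := by
  intro H K hHK
  have ⟨_, _, hKH, _⟩ := hHK
  exact (sigmaCentral_comap_iff hf hKH.le).1 (hX _ _ (hHK.comap hf))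

end Comap

variable {H K J : Subgroup X}

theorem IsChiefFactor.sup_of_inf_sup_eq [J.Normal] (hHK : IsChiefFactor H K)
    (hJ : H ⊓ (K ⊔ J) = K) : IsChiefFactor (H ⊔ J) (K ⊔ J) := by
  obtain ⟨hH, hK, hKH, hmin⟩ := hHK
  refine ⟨inferInstance, inferInstance, lt_of_le_of_ne (sup_le_sup_right hKH.le J) fun h => ?_,
    fun L hL hKL hLH => ?_⟩
  · refine hKH.ne ?_
    rw [← hJ, h, inf_eq_left.2 le_sup_left]
  rcases hmin (L ⊓ H) inferInstance (le_inf (le_sup_left.trans hKL) hKH.le) inf_le_right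
    with h | h
  · refine .inl (le_antisymm (fun x hx => ?_) hKL)
    obtain ⟨y, hy, z, hz, rfl⟩ := mem_sup_of_normal_right.1 (hLH hx)
    have hyL : y ∈ L := by
      simpa using L.mul_mem hx (L.inv_mem (hKL (mem_sup_right hz)))
    have hyK : y ∈ K := h ▸ ⟨hyL, hy⟩
    exact mul_mem (mem_sup_left hyK) (mem_sup_right hz)
  · exact .inr (le_antisymm hLH (sup_le (h ▸ inf_le_left) (le_sup_right.trans hKL)))

theorem chiefCentralizer_sup_of_inf_sup_eq [H.Normal] [J.Normal] (hJ : H ⊓ (K ⊔ J) = K) :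
    chiefCentralizer (H ⊔ J) (K ⊔ J) = chiefCentralizer H K := by
  ext g
  simp only [chiefCentralizer, Set.mem_ofPred_eq, ← commutatorElement_def]
  constructor
  · intro hg h hh
    rw [← hJ]
    exact ⟨commutator_le_right _ _ (commutator_mem_commutator (mem_top g) hh),
      hg h (mem_sup_left hh)⟩
  · intro hg x hx
    obtain ⟨h, hh, j, hj, rfl⟩ := mem_sup_of_normal_right.1 hx
    have hgj : ⁅g, j⁆ ∈ J :=
      commutator_le_right _ _ (commutator_mem_commutator (mem_top g) hj)
    have hcomm : ⁅g, h * j⁆ = ⁅g, h⁆ * (h * ⁅g, j⁆ * h⁻¹) := by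
      simp only [commutatorElement_def]
      group
    rw [hcomm]
    exact mul_mem (mem_sup_left (hg h hh)) (mem_sup_right (Normal.conj_mem ‹_› _ hgj h))

theorem relIndex_sup_of_inf_sup_eq [K.Normal] [J.Normal] (hKH : K ≤ H)
    (hJ : H ⊓ (K ⊔ J) = K) : (K ⊔ J).relIndex (H ⊔ J) = K.relIndex H :=
  calc (K ⊔ J).relIndex (H ⊔ J) = (K ⊔ J).relIndex (H ⊔ (K ⊔ J)) := by
        rw [← sup_assoc, sup_eq_left.2 hKH]
    _ = (H ⊓ (K ⊔ J)).relIndex H := by rw [relIndex_sup_right, inf_relIndex_left]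
    _ = K.relIndex H := by rw [hJ]

theorem sigmaCentral_sup_iff [Finite X] [J.Normal] (hHK : IsChiefFactor H K)
    (hJ : H ⊓ (K ⊔ J) = K) : SigmaCentral σ (H ⊔ J) (K ⊔ J) ↔ SigmaCentral σ H K := by
  obtain ⟨hH, hK, hKH, -⟩ := hHK
  have hC : chiefCentralizerSubgroup (H ⊔ J) (K ⊔ J) = chiefCentralizerSubgroup H K :=
    SetLike.coe_injective <| by
      rw [coe_chiefCentralizerSubgroup, coe_chiefCentralizerSubgroup,
        chiefCentralizer_sup_of_inf_sup_eq hJ]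
  rw [sigmaCentral_iff (sup_le_sup_right hKH.le J), sigmaCentral_iff hKH.le,
    relIndex_sup_of_inf_sup_eq hKH.le hJ, hC]

theorem sigmaCentral_of_quotient [Finite X] [J.Normal] (hQ : SigmaNilpotent σ (X ⧸ J))
    (hHK : IsChiefFactor H K) (hJ : H ⊓ (K ⊔ J) = K) : SigmaCentral σ H K := by
  set π := QuotientGroup.mk' J
  have hπ : Function.Surjective π := QuotientGroup.mk'_surjective J
  have hcomap (L : Subgroup X) : (L.map π).comap π = L ⊔ J := by
    rw [comap_map_eq, QuotientGroup.ker_mk']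
  have hchief : IsChiefFactor (H.map π) (K.map π) :=
    .of_comap hπ (by rw [hcomap, hcomap]; exact hHK.sup_of_inf_sup_eq hJ)
  have ⟨_, _, hKH, _⟩ := hchief
  rw [← sigmaCentral_sup_iff hHK hJ, ← hcomap, ← hcomap, sigmaCentral_comap_iff hπ hKH.le]
  exact hQ _ _ hchief

theorem centralizer_le_chiefCentralizerSubgroup [K.Normal] (hH : H ≤ K ⊔ J) :
    centralizer (J : Set X) ≤ chiefCentralizerSubgroup H K := by
  intro g hg
  rw [← SetLike.mem_coe, coe_chiefCentralizerSubgroup]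
  intro x hx
  obtain ⟨k, hk, j, hj, rfl⟩ := mem_sup_of_normal_left.1 (hH hx)
  have hjg : j * g⁻¹ = g⁻¹ * j := mem_centralizer_iff.1 (inv_mem hg) j hj
  have hcomm : g * (k * j) * g⁻¹ * (k * j)⁻¹ = g * k * g⁻¹ * k⁻¹ :=
    calc g * (k * j) * g⁻¹ * (k * j)⁻¹ = g * k * (j * g⁻¹) * j⁻¹ * k⁻¹ := by group
      _ = g * k * g⁻¹ * k⁻¹ := by rw [hjg]; group
  rw [hcomm]
  exact mul_mem (Normal.conj_mem ‹_› k hk g) (inv_mem hk)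

theorem sigmaCentral_of_le_sup [Finite X] {B : Subgroup X} [K.Normal] (hKH : K ≤ H)
    (hH : H ≤ K ⊔ J) (hJ : PrimaryIn σ i (Nat.card J)) (hB : B ≤ centralizer J)
    (hBi : PrimaryIn σ i B.index) : SigmaCentral σ H K := by
  refine (sigmaCentral_iff hKH).2 ⟨i, PrimaryIn.mul (hJ.of_dvd ?_) (hBi.of_dvd ?_)⟩
  · calc K.relIndex H ∣ K.relIndex (K ⊔ J) :=
          ⟨_, (relIndex_mul_relIndex K H _ hKH hH).symm⟩
      _ = K.relIndex J := relIndex_sup_left _ _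
      _ ∣ Nat.card J := relIndex_dvd_card _ _
  · exact index_dvd_of_le (hB.trans (centralizer_le_chiefCentralizerSubgroup hH))

theorem sigmaNilpotent_of_quotient_of_le_centralizer [Finite X] [J.Normal] {B : Subgroup X}
    (hQ : SigmaNilpotent σ (X ⧸ J)) (hJ : PrimaryIn σ i (Nat.card J))
    (hB : B ≤ centralizer J) (hBi : PrimaryIn σ i B.index) : SigmaNilpotent σ X := by
  intro H K hHK
  have ⟨hH, hK, hKH, hmin⟩ := hHK
  rcases hmin (H ⊓ (K ⊔ J)) inferInstance (le_inf hKH.le le_sup_left) inf_le_left with h | h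
  · exact sigmaCentral_of_quotient hQ hHK h
  · exact sigmaCentral_of_le_sup hKH.le (inf_eq_left.1 h) hJ hB hBi

end

theorem join_minimal_normal_sigma_nilpotent_of_hall_centralizes_general
    {ι : Type*} (σ : ι → Set ℕ)
    (G : Type*) [Group G] [Finite G]
    (N : Subgroup G) (hN : IsMinimalNormal N)
    (i : ι) (hNi : IsPiSubgroup (σ i) N)
    (A : Subgroup G) (hA : SigmaNilpotent σ A)
    (Aπ : Subgroup G) (hAπ : IsHallIn {p : ℕ | p.Prime ∧ p ∉ σ i} Aπ A)
    (hcent : Aπ ≤ Subgroup.centralizer (N : Set G)) :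
    SigmaNilpotent σ ((A ⊔ N : Subgroup G) : Type _) := by
  have := hN.1
  obtain ⟨hAπA, -, hAπidx⟩ := hAπ
  have hQ : SigmaNilpotent σ (↥(A ⊔ N) ⧸ N.subgroupOf (A ⊔ N)) :=
    (hA.of_surjective (QuotientGroup.mk'_surjective (N.subgroupOf A))).of_surjective
      (f := (QuotientGroup.quotientInfEquivProdNormalQuotient A N).toMonoidHom)
      (MulEquiv.surjective _)
  have hJ : PrimaryIn σ i (Nat.card (N.subgroupOf (A ⊔ N))) := by
    rwa [Nat.card_congr (subgroupOfEquivOfLe le_sup_right).toEquiv]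
  have hB : Aπ.subgroupOf (A ⊔ N) ≤ centralizer (N.subgroupOf (A ⊔ N)) := fun x hx =>
    mem_centralizer_iff.2 fun y hy => Subtype.ext (mem_centralizer_iff.1 (hcent hx) y hy)
  have hBi : PrimaryIn σ i (Aπ.relIndex (A ⊔ N)) := by
    rw [← relIndex_mul_relIndex _ _ _ hAπA le_sup_left, relIndex_sup_normal_right]
    exact PrimaryIn.mul (fun p hp hpd => of_not_not fun h => hAπidx p hp hpd ⟨hp, h⟩)
      (PrimaryIn.of_dvd hNi (relIndex_dvd_card _ _))
  exact sigmaNilpotent_of_quotient_of_le_centralizer hQ hJ hB hBi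

/-- If `N` is a minimal normal `σ_i`-subgroup of a σ-soluble group `G`, `A ≤ G`
is σ-nilpotent, and the Hall `σ_i'`-subgroup of `A` centralizes `N`, then `AN`
is σ-nilpotent. -/
theorem join_minimal_normal_sigma_nilpotent_of_hall_centralizes
    {ι : Type*} (σ : ι → Set ℕ) (hσ : IsPrimePartition σ)
    (G : Type*) [Group G] [Finite G] (hsol : SigmaSoluble σ G)
    (N : Subgroup G) (hN : IsMinimalNormal N)
    (i : ι) (hNi : IsPiSubgroup (σ i) N)
    (A : Subgroup G) (hA : SigmaNilpotent σ A)
    (Aπ : Subgroup G) (hAπ : IsHallIn {p : ℕ | p.Prime ∧ p ∉ σ i} Aπ A)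
    (hcent : Aπ ≤ Subgroup.centralizer (N : Set G)) :
    SigmaNilpotent σ ((A ⊔ N : Subgroup G) : Type _) :=
  join_minimal_normal_sigma_nilpotent_of_hall_centralizes_general σ G N hN i hNi A hA Aπ hAπ hcent
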